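/- arXiv:2502.05688 — 3 statements merged into one kernel-verified Lean document; each statement's English description precedes it below -/
import Mathlib

section
/- Let n be a positive integer, let Σ be a real symmetric positive definite 2n×2n matrix and let Ω be an invertible real skew-symmetric 2n×2n matrix. Then the complex matrix Σ + (i/2)·Ω is positive semidefinite if and only if every complex eigenvalue λ of the complex matrix 2i·Ω⁻¹·Σ satisfies |λ| ≥ 1. -/
open Matrix Complex
open scoped ComplexOrder

/-!
Factor `Σ = Bᵀ B` with `B` invertible and put `K = B⁻ᵀ Ω B⁻¹`, again real, skew and invertible.
Congruence by `B` turns `Σ + (i/2)Ω` into `1 + H` with `H = (i/2)K`, and similarity by `B` turns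
`2iΩ⁻¹Σ` into `(-H)⁻¹`. The matrix `H` is Hermitian, so its spectrum is real, and `Hᵀ = -H`, so its
spectrum is symmetric about `0`. Hence `1 + H ⪰ 0` iff the spectrum of `H` lies in `[-1, 1]`, iff
the spectrum of `(-H)⁻¹` avoids the open unit disc.
-/

theorem spectrum.forall_one_le_norm_inv_iff {𝕜 A : Type*} [NormedField 𝕜] [Ring A]
    [Algebra 𝕜 A] (a : Aˣ) :
    (∀ μ ∈ spectrum 𝕜 (↑a⁻¹ : A), 1 ≤ ‖μ‖) ↔ ∀ x ∈ spectrum 𝕜 (a : A), ‖x‖ ≤ 1 := by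
  have hpos : ∀ x ∈ spectrum 𝕜 (a : A), 0 < ‖x‖ := fun x hx =>
    norm_pos_iff.mpr fun h0 => spectrum.zero_notMem 𝕜 a.isUnit (h0 ▸ hx)
  rw [← spectrum.map_inv]
  refine ⟨fun h x hx => ?_, fun h μ hμ => ?_⟩
  · simpa [one_le_inv₀ (hpos x hx)] using h x⁻¹ (by rwa [Set.inv_mem_inv])
  · exact (inv_le_one₀ (by simpa using hpos _ hμ)).mp (by simpa using h μ⁻¹ hμ)

namespace Matrix

variable {n : Type*} [Fintype n] [DecidableEq n]

theorem spectrum_transpose {K : Type*} [Field K] (M : Matrix n n K) :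
    spectrum K Mᵀ = spectrum K M :=
  Set.ext fun r => by simp only [mem_spectrum_iff_isRoot_charpoly, charpoly_transpose]

theorem spectrum_neg_eq_of_transpose_eq_neg {K : Type*} [Field K] {M : Matrix n n K}
    (hM : Mᵀ = -M) : spectrum K (-M) = spectrum K M := by
  rw [← hM, spectrum_transpose]

theorem IsHermitian.posSemidef_one_add_iff {𝕜 : Type*} [RCLike 𝕜] {H : Matrix n n 𝕜}
    (hH : H.IsHermitian) (hsymm : spectrum 𝕜 (-H) = spectrum 𝕜 H) :
    (1 + H).PosSemidef ↔ ∀ x ∈ spectrum 𝕜 H, ‖x‖ ≤ 1 := by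
  have hreal : ∀ x ∈ spectrum 𝕜 H, ∃ r : ℝ, x = r := by
    rw [hH.spectrum_eq_image_range]
    rintro _ ⟨r, -, rfl⟩
    exact ⟨r, rfl⟩
  rw [posSemidef_iff_isHermitian_and_spectrum_nonneg, ← map_one (algebraMap 𝕜 _),
    ← spectrum.singleton_add_eq, Set.singleton_add, Set.image_subset_iff, map_one,
    and_iff_right (isHermitian_one.add hH)]
  refine ⟨fun h x hx => ?_, fun h x hx => ?_⟩
  · have hneg : -x ∈ spectrum 𝕜 H := by rwa [← hsymm, ← spectrum.neg_eq, Set.neg_mem_neg]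
    obtain ⟨r, rfl⟩ := hreal x hx
    have h₁ : (0 : 𝕜) ≤ 1 + r := h hx
    have h₂ : (0 : 𝕜) ≤ 1 + -r := h hneg
    norm_cast at h₁ h₂
    rw [RCLike.norm_ofReal, abs_le]
    constructor <;> linarith
  · obtain ⟨r, rfl⟩ := hreal x hx
    have hr := abs_le.mp (by simpa using h r hx)
    show (0 : 𝕜) ≤ 1 + r
    exact_mod_cast (by linarith [hr.1] : (0 : ℝ) ≤ 1 + r)

theorem posSemidef_star_mul_add_smul_iff {R : Type*} [CommRing R] [StarRing R] [PartialOrder R]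
    {B : Matrix n n R} (hB : IsUnit B) (K : Matrix n n R) (c : R) :
    (star B * B + c • (star B * K * B)).PosSemidef ↔ (1 + c • K).PosSemidef := by
  rw [← hB.posSemidef_star_left_conjugate_iff (x := 1 + c • K), Matrix.mul_add, Matrix.add_mul,
    Matrix.mul_one, Matrix.mul_smul, Matrix.smul_mul]

theorem spectrum_smul_inv_mul_eq {R : Type*} [CommRing R] {B C : Matrix n n R}
    (hB : IsUnit B) (hC : IsUnit C) (K : Matrix n n R) (c : R) :
    spectrum R (c • ((C * K * B)⁻¹ * (C * B))) = spectrum R (c • K⁻¹) := by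
  lift B to (Matrix n n R)ˣ using hB
  have hCinv : C⁻¹ * C = 1 := C.nonsing_inv_mul ((isUnit_iff_isUnit_det C).mp hC)
  have hconj : c • ((C * K * (B : Matrix n n R))⁻¹ * (C * B)) =
      ((B⁻¹ : (Matrix n n R)ˣ) : Matrix n n R) * (c • K⁻¹) * B := by
    rw [Matrix.mul_inv_rev, Matrix.mul_inv_rev, ← Matrix.coe_units_inv]
    simp only [Matrix.mul_assoc, Matrix.mul_smul, Matrix.smul_mul]
    rw [← Matrix.mul_assoc C⁻¹, hCinv, Matrix.one_mul]
  rw [hconj, spectrum.units_conjugate']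

theorem exists_transpose_eq_neg_and_eq_transpose_mul_mul {R : Type*} [CommRing R]
    {B Ω : Matrix n n R} (hB : IsUnit B) (hΩunit : IsUnit Ω) (hΩskew : Ωᵀ = -Ω) :
    ∃ K : Matrix n n R, Kᵀ = -K ∧ IsUnit K ∧ Ω = Bᵀ * K * B := by
  have hBdet : IsUnit B.det := (isUnit_iff_isUnit_det B).mp hB
  have hBTdet : IsUnit Bᵀ.det := by rwa [det_transpose]
  refine ⟨(Bᵀ)⁻¹ * Ω * B⁻¹, ?_, ?_, ?_⟩
  · rw [transpose_mul, transpose_mul, hΩskew, transpose_nonsing_inv, transpose_nonsing_inv,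
      transpose_transpose]
    simp only [Matrix.neg_mul, Matrix.mul_neg, Matrix.mul_assoc]
  · exact ((isUnit_nonsing_inv_iff.mpr ((isUnit_transpose B).mpr hB)).mul hΩunit).mul
      (isUnit_nonsing_inv_iff.mpr hB)
  · rw [← Matrix.mul_assoc, ← Matrix.mul_assoc, mul_nonsing_inv _ hBTdet, Matrix.one_mul,
      Matrix.mul_assoc, nonsing_inv_mul _ hBdet, Matrix.mul_one]

theorem posSemidef_one_add_I_div_two_smul_iff {K : Matrix n n ℝ} (hK : Kᵀ = -K)
    (hKunit : IsUnit K) :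
    (1 + (I / 2) • K.map ofReal).PosSemidef ↔
      ∀ μ ∈ spectrum ℂ ((2 * I) • (K.map ofReal)⁻¹), 1 ≤ ‖μ‖ := by
  have hKT : (K.map ofReal)ᵀ = -K.map ofReal := by
    rw [← transpose_map, hK, Matrix.map_neg _ ofReal_neg]
  have hKH : (K.map ofReal)ᴴ = -K.map ofReal := by
    rw [← conjTranspose_map _ fun _ => (conj_ofReal _).symm,
      conjTranspose_eq_transpose_of_trivial, hK, Matrix.map_neg _ ofReal_neg]
  set H := (I / 2) • K.map ofReal
  have hH : H.IsHermitian := by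
    rw [IsHermitian, conjTranspose_smul, hKH, smul_neg, ← neg_smul, star_div₀, Complex.star_def,
      conj_I, conj_ofNat, neg_div, neg_neg]
  have hsymm : spectrum ℂ (-H) = spectrum ℂ H := by
    refine spectrum_neg_eq_of_transpose_eq_neg ?_
    rw [transpose_smul, hKT, smul_neg]
  have hKinv : K.map ofReal * (K.map ofReal)⁻¹ = 1 :=
    mul_nonsing_inv _ ((isUnit_iff_isUnit_det _).mp (hKunit.map Complex.ofRealHom.mapMatrix))
  have hinv : -H * ((2 * I) • (K.map ofReal)⁻¹) = 1 := by
    have hscalar : -(I / 2) * (2 * I) = 1 := by linear_combination (-1 : ℂ) * I_sq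
    rw [← neg_smul, smul_mul_smul_comm, hKinv, hscalar, one_smul]
  let u : (Matrix n n ℂ)ˣ := ⟨-H, (2 * I) • (K.map ofReal)⁻¹, hinv, mul_eq_one_comm.mp hinv⟩
  rw [hH.posSemidef_one_add_iff hsymm, ← hsymm]
  exact (spectrum.forall_one_le_norm_inv_iff u).symm

end Matrix

theorem RSUP_iff_symplectic_eigenvalues_general (n : ℕ)
    (Sig Ω : Matrix (Fin (2 * n)) (Fin (2 * n)) ℝ)
    (hPD : Sig.PosDef)
    (hΩunit : IsUnit Ω) (hΩskew : Ωᵀ = -Ω) :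
    (Sig.map Complex.ofReal + (Complex.I / 2) • Ω.map Complex.ofReal).PosSemidef
      ↔ ∀ μ : ℂ, μ ∈ spectrum ℂ
          ((2 * Complex.I) • ((Ω.map Complex.ofReal)⁻¹ * Sig.map Complex.ofReal)) →
          1 ≤ ‖μ‖ := by
  obtain ⟨B, hB, rfl⟩ : ∃ B, IsUnit B ∧ Sig = star B * B := by
    open scoped MatrixOrder in
    exact CStarAlgebra.isStrictlyPositive_iff_eq_star_mul_self.mp hPD.isStrictlyPositive
  have hBT : star B = Bᵀ := by rw [star_eq_conjTranspose, conjTranspose_eq_transpose_of_trivial]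
  obtain ⟨K, hKskew, hKunit, rfl⟩ :=
    exists_transpose_eq_neg_and_eq_transpose_mul_mul hB hΩunit hΩskew
  have hmap_star : (star B).map ofReal = star (B.map ofReal) :=
    conjTranspose_map _ fun _ => (conj_ofReal _).symm
  have hBc : IsUnit (B.map ofReal) := hB.map Complex.ofRealHom.mapMatrix
  have hmap_mul : ∀ M N : Matrix (Fin (2 * n)) (Fin (2 * n)) ℝ,
      (M * N).map ofReal = M.map ofReal * N.map ofReal :=
    fun _ _ => Matrix.map_mul (f := ofRealHom)
  rw [← hBT, hmap_mul, hmap_mul, hmap_mul, hmap_star, posSemidef_star_mul_add_smul_iff hBc,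
    spectrum_smul_inv_mul_eq hBc hBc.star, posSemidef_one_add_I_div_two_smul_iff hKskew hKunit]

/-- The Robertson–Schrödinger uncertainty principle `Sig + (i/2)Ω ⪰ 0` holds iff every
(noncommutative symplectic) eigenvalue `μ` of `2i Ω⁻¹ Sig` satisfies `|μ| ≥ 1`. -/
theorem RSUP_iff_symplectic_eigenvalues (n : ℕ) (hn : 0 < n)
    (Sig Ω : Matrix (Fin (2 * n)) (Fin (2 * n)) ℝ)
    (hSym : Sigᵀ = Sig) (hPD : Sig.PosDef)
    (hΩunit : IsUnit Ω) (hΩskew : Ωᵀ = -Ω) :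
    (Sig.map Complex.ofReal + (Complex.I / 2) • Ω.map Complex.ofReal).PosSemidef
      ↔ ∀ μ : ℂ, μ ∈ spectrum ℂ
          ((2 * Complex.I) • ((Ω.map Complex.ofReal)⁻¹ * Sig.map Complex.ofReal)) →
          1 ≤ ‖μ‖ :=
  RSUP_iff_symplectic_eigenvalues_general n Sig Ω hPD hΩunit hΩskew
end

section
/- Let m, n be real numbers with m² + n² < 1, set R = √(m²+n²), and let Σ⁰(m,n) be the 8×8 real matrix [[I₄, γ],[γ, I₄]] with γ(m,n) = [[n·I₂, m·σ_z],[m·σ_z, −n·I₂]], σ_z = diag(1,−1). Let A_n = ∂Σ⁰/∂n = [[0, γ_n],[γ_n, 0]] with γ_n = [[I₂, 0],[0, −I₂]], and A_m = ∂Σ⁰/∂m = [[0, γ_m],[γ_m, 0]] with γ_m = [[0, σ_z],[σ_z, 0]]. Then: (1/2)·Tr[(Σ⁰)⁻¹ A_n (Σ⁰)⁻¹ A_n] = 4(1 − m² + n²)/(1 − R²)², (1/2)·Tr[(Σ⁰)⁻¹ A_m (Σ⁰)⁻¹ A_m] = 4(1 + m² − n²)/(1 − R²)², and (1/2)·Tr[(Σ⁰)⁻¹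 A_n (Σ⁰)⁻¹ A_m] = 8mn/(1 − R²)². -/
/-!
Write `Σ⁰ = [[1, γ], [γ, 1]]` with `γ = n γₙ + m γₘ`, where `γₙ, γₘ` are anticommuting
involutions. Then `γ² = R² · 1`, so `(Σ⁰)⁻¹ = (1 - R²)⁻¹ [[1, -γ], [-γ, 1]]`, and for off-diagonal
`A = [[0, δ], [δ, 0]]`, `B = [[0, ε], [ε, 0]]` one gets
`Tr[(Σ⁰)⁻¹ A (Σ⁰)⁻¹ B] = 2 Tr(δε + γδγε) / (1 - R²)²`.
The Clifford relations give `γ γₙ γ = (n² - m²) γₙ + 2nm γₘ` (and symmetrically for `γₘ`), while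
`Tr(γₙ γₘ) = 0` by anticommutation, which leaves only multiples of `Tr 1 = 4`.
-/

open Matrix

section Anticommuting

variable {R A : Type*} [CommRing R] [Ring A] [Algebra R A] {a b : A}

theorem smul_add_smul_mul_self_of_anticomm (ha : a * a = 1) (hb : b * b = 1)
    (hab : a * b = -(b * a)) (x y : R) :
    (x • a + y • b) * (x • a + y • b) = (x ^ 2 + y ^ 2) • (1 : A) := by
  simp only [add_mul, mul_add, smul_mul_smul, ha, hb, hab]
  module

theorem smul_add_smul_mul_mul_smul_add_smul_of_anticomm (ha : a * a = 1) (hb : b * b = 1)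
    (hab : a * b = -(b * a)) (x y : R) :
    (x • a + y • b) * a * (x • a + y • b) = (x ^ 2 - y ^ 2) • a + (2 * x * y) • b := by
  set g := x • a + y • b
  have hcomm : g * a = (2 * x) • (1 : A) - a * g := by
    simp only [g, add_mul, mul_add, smul_mul_assoc, mul_smul_comm, ha, hab]
    module
  calc g * a * g = (2 * x) • g - a * (g * g) := by
        rw [hcomm, sub_mul, smul_mul_assoc, one_mul, mul_assoc]
    _ = (x ^ 2 - y ^ 2) • a + (2 * x * y) • b := by
        rw [smul_add_smul_mul_self_of_anticomm ha hb hab, mul_smul_comm, mul_one]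
        module

end Anticommuting

namespace Matrix

theorem trace_fromBlocks {m n α : Type*} [Fintype m] [Fintype n] [AddCommMonoid α]
    (A : Matrix m m α) (B : Matrix m n α) (C : Matrix n m α) (D : Matrix n n α) :
    (fromBlocks A B C D).trace = A.trace + D.trace := by
  simp [trace, Fintype.sum_sum_type]

section BlockInverse

variable {ι K : Type*} [Fintype ι] [DecidableEq ι] [Field K] {γ : Matrix ι ι K} {r : K}

theorem fromBlocks_one_mul_fromBlocks_one_neg (hγ : γ * γ = r • 1) :
    fromBlocks 1 γ γ 1 * fromBlocks 1 (-γ) (-γ) 1 = (1 - r) • (1 : Matrix (ι ⊕ ι) (ι ⊕ ι) K) := by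
  rw [fromBlocks_multiply, ← fromBlocks_one, fromBlocks_smul]
  simp only [Matrix.one_mul, Matrix.mul_one, Matrix.mul_neg, hγ, smul_zero]
  congr 1 <;> module

theorem inv_fromBlocks_one_one (hγ : γ * γ = r • 1) (hr : r ≠ 1) :
    (fromBlocks 1 γ γ 1)⁻¹ = (1 - r)⁻¹ • fromBlocks 1 (-γ) (-γ) 1 := by
  refine inv_eq_right_inv ?_
  rw [Matrix.mul_smul, fromBlocks_one_mul_fromBlocks_one_neg hγ, smul_smul,
    inv_mul_cancel₀ (sub_ne_zero.mpr hr.symm), one_smul]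

theorem trace_inv_mul_fromBlocks_zero_mul_inv_mul_fromBlocks_zero (hγ : γ * γ = r • 1)
    (hr : r ≠ 1) (δ ε : Matrix ι ι K) :
    ((fromBlocks 1 γ γ 1)⁻¹ * fromBlocks 0 δ δ 0 * (fromBlocks 1 γ γ 1)⁻¹ *
        fromBlocks 0 ε ε 0).trace = 2 * (δ * ε + γ * δ * γ * ε).trace / (1 - r) ^ 2 := by
  rw [inv_fromBlocks_one_one hγ hr]
  simp only [Matrix.smul_mul, Matrix.mul_smul, trace_smul, fromBlocks_multiply, trace_fromBlocks]
  simp only [Matrix.one_mul, Matrix.mul_one, Matrix.mul_zero, zero_add, add_zero,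
    Matrix.neg_mul, Matrix.mul_neg, neg_neg, Matrix.add_mul, Matrix.mul_assoc, trace_add,
    smul_eq_mul]
  field_simp [sub_ne_zero.mpr hr.symm]
  ring

end BlockInverse

section Anticommuting

variable {ι K : Type*} [Fintype ι] [CommRing K] [IsAddTorsionFree K] {a b : Matrix ι ι K}

theorem trace_mul_eq_zero_of_anticomm (hab : a * b = -(b * a)) : (a * b).trace = 0 := by
  have h : (a * b).trace = -(a * b).trace := by
    nth_rewrite 1 [hab]
    rw [trace_neg, trace_mul_comm]
  exact self_eq_neg.mp h

variable [DecidableEq ι]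

theorem trace_mul_add_sandwich_of_anticomm_left (ha : a * a = 1) (hb : b * b = 1)
    (hab : a * b = -(b * a)) (x y : K) :
    (a * a + (x • a + y • b) * a * (x • a + y • b) * a).trace =
      (1 + x ^ 2 - y ^ 2) * Fintype.card ι := by
  have hba : (b * a).trace = 0 := by
    rw [trace_mul_comm]
    exact trace_mul_eq_zero_of_anticomm hab
  rw [smul_add_smul_mul_mul_smul_add_smul_of_anticomm ha hb hab]
  simp only [ha, Matrix.add_mul, smul_mul_assoc, trace_add, trace_smul, trace_one, hba,
    smul_eq_mul]
  ring

theorem trace_mul_add_sandwich_of_anticomm_right (ha : a * a = 1) (hb : b * b = 1)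
    (hab : a * b = -(b * a)) (x y : K) :
    (b * b + (x • a + y • b) * b * (x • a + y • b) * b).trace =
      (1 - x ^ 2 + y ^ 2) * Fintype.card ι := by
  have hba : b * a = -(a * b) := by rw [hab, neg_neg]
  rw [add_comm (x • a), smul_add_smul_mul_mul_smul_add_smul_of_anticomm hb ha hba]
  simp only [hb, Matrix.add_mul, smul_mul_assoc, trace_add, trace_smul, trace_one,
    trace_mul_eq_zero_of_anticomm hab, smul_eq_mul]
  ring

theorem trace_mul_add_sandwich_of_anticomm_left_right (ha : a * a = 1) (hb : b * b = 1)
    (hab : a * b = -(b * a)) (x y : K) :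
    (a * b + (x • a + y • b) * a * (x • a + y • b) * b).trace =
      2 * x * y * Fintype.card ι := by
  rw [smul_add_smul_mul_mul_smul_add_smul_of_anticomm ha hb hab]
  simp only [hb, Matrix.add_mul, smul_mul_assoc, trace_add, trace_smul, trace_one,
    trace_mul_eq_zero_of_anticomm hab, smul_eq_mul]
  ring

end Anticommuting

end Matrix

/-- Fisher–Rao metric components of the normalized covariance matrix `Sig0`:
`g⁰₁₁ = 4(1 − m² + n²)/(1 − R²)²`, `g⁰₂₂ = 4(1 + m² − n²)/(1 − R²)²`,
`g⁰₁₂ = 8mn/(1 − R²)²`. -/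
theorem fisher_rao_components (m n : ℝ) (hmn : m ^ 2 + n ^ 2 < 1)
    (R : ℝ) (hR : R = Real.sqrt (m ^ 2 + n ^ 2))
    (σz : Matrix (Fin 2) (Fin 2) ℝ) (hσz : σz = Matrix.diagonal ![1, -1])
    (γ : Matrix (Fin 2 ⊕ Fin 2) (Fin 2 ⊕ Fin 2) ℝ)
    (hγ : γ = Matrix.fromBlocks (n • (1 : Matrix (Fin 2) (Fin 2) ℝ)) (m • σz)
        (m • σz) (-(n • (1 : Matrix (Fin 2) (Fin 2) ℝ))))
    (Sig0 : Matrix ((Fin 2 ⊕ Fin 2) ⊕ (Fin 2 ⊕ Fin 2)) ((Fin 2 ⊕ Fin 2) ⊕ (Fin 2 ⊕ Fin 2)) ℝ)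
    (hSig0 : Sig0 = Matrix.fromBlocks 1 γ γ 1)
    (γn γm : Matrix (Fin 2 ⊕ Fin 2) (Fin 2 ⊕ Fin 2) ℝ)
    (hγn : γn = Matrix.fromBlocks 1 0 0 (-1))
    (hγm : γm = Matrix.fromBlocks 0 σz σz 0)
    (An Am : Matrix ((Fin 2 ⊕ Fin 2) ⊕ (Fin 2 ⊕ Fin 2)) ((Fin 2 ⊕ Fin 2) ⊕ (Fin 2 ⊕ Fin 2)) ℝ)
    (hAn : An = Matrix.fromBlocks 0 γn γn 0)
    (hAm : Am = Matrix.fromBlocks 0 γm γm 0) :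
    (1 / 2 : ℝ) * (Sig0⁻¹ * An * Sig0⁻¹ * An).trace
        = 4 * (1 - m ^ 2 + n ^ 2) / (1 - R ^ 2) ^ 2 ∧
    (1 / 2 : ℝ) * (Sig0⁻¹ * Am * Sig0⁻¹ * Am).trace
        = 4 * (1 + m ^ 2 - n ^ 2) / (1 - R ^ 2) ^ 2 ∧
    (1 / 2 : ℝ) * (Sig0⁻¹ * An * Sig0⁻¹ * Am).trace
        = 8 * m * n / (1 - R ^ 2) ^ 2 := by
  have hσz2 : σz * σz = 1 := by
    rw [hσz, diagonal_mul_diagonal, ← diagonal_one]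
    congr 1
    ext i
    fin_cases i <;> simp
  have hγn2 : γn * γn = 1 := by simp [hγn, fromBlocks_multiply, ← fromBlocks_one]
  have hγm2 : γm * γm = 1 := by simp [hγm, fromBlocks_multiply, hσz2, ← fromBlocks_one]
  have hanti : γn * γm = -(γm * γn) := by simp [hγn, hγm, fromBlocks_multiply, fromBlocks_neg]
  have hγ' : γ = n • γn + m • γm := by simp [hγ, hγn, hγm, fromBlocks_smul, fromBlocks_add]
  have hγ2 : γ * γ = (n ^ 2 + m ^ 2) • 1 :=
    hγ' ▸ smul_add_smul_mul_self_of_anticomm hγn2 hγm2 hanti n m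
  have hr : n ^ 2 + m ^ 2 ≠ 1 := by linarith
  have hR2 : R ^ 2 = n ^ 2 + m ^ 2 := by rw [hR, Real.sq_sqrt (by positivity), add_comm]
  have hcard : (Fintype.card (Fin 2 ⊕ Fin 2) : ℝ) = 4 := by simp
  subst hSig0 hAn hAm
  simp only [trace_inv_mul_fromBlocks_zero_mul_inv_mul_fromBlocks_zero hγ2 hr]
  simp only [hγ', hR2, hcard, trace_mul_add_sandwich_of_anticomm_left hγn2 hγm2 hanti,
    trace_mul_add_sandwich_of_anticomm_right hγn2 hγm2 hanti,
    trace_mul_add_sandwich_of_anticomm_left_right hγn2 hγm2 hanti]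
  refine ⟨?_, ?_, ?_⟩ <;> ring
end

section
/- Let m, n be real numbers with 0 < m² + n² < 1, set R = √(m²+n²), b(m,n) = (1+R)/(1−R), and let Σ(m,n) be the 8×8 real-matrix-valued function (b/2)·[[I₄, γ],[γ, I₄]] with γ(m,n) = [[n·I₂, m·σ_z],[m·σ_z, −n·I₂]], σ_z = diag(1,−1). Define the 2×2 matrix g(m,n) by g_{μν} = (1/2)·Tr[Σ⁻¹(∂_μΣ)Σ⁻¹(∂_νΣ)], where ∂₁ = ∂/∂n and ∂₂ = ∂/∂m are the entrywise partial derivatives of Σ at (m,n). Then det g(m,n) = 16·(1 + (2 − R)²)/(1 − R²)³. -/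
/-!
Write `Σ(m, n) = (b/2)(1 + Γ)` with `Γ = m Γₘ + n Γₙ`, where `Γₘ` and `Γₙ` are anticommuting
involutions (a Clifford pair), so `Γ² = R²`. Then `Σ⁻¹ = 2(1 - Γ)/(b(1 - R²))` and
`Σ⁻¹ ∂_μ Σ = (b'/b)(θ_μ/R) + (1 - Γ) ∂_μΓ/(1 - R²)`. Anticommutation makes every trace that is odd
in `Γₘ, Γₙ` vanish, so `g` is a scalar matrix plus a rank-one matrix in `θ = (n, m)`, and its
determinant is an explicit rational function of `R`.
-/

open Matrix

namespace Matrix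

variable {ι 𝕜 : Type*} [Fintype ι] [DecidableEq ι] [Field 𝕜]

structure IsCliffordPair (E F : Matrix ι ι 𝕜) : Prop where
  mul_self_left : E * E = 1
  mul_self_right : F * F = 1
  anticomm : E * F + F * E = 0

namespace IsCliffordPair

variable {E F : Matrix ι ι 𝕜}

theorem symm (h : IsCliffordPair E F) : IsCliffordPair F E :=
  ⟨h.mul_self_right, h.mul_self_left, by rw [add_comm, h.anticomm]⟩

/-- Conjugation by the involution `F` negates `E` and preserves the trace. -/
theorem trace_left [CharZero 𝕜] (h : IsCliffordPair E F) : E.trace = 0 := by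
  have hconj : E = -(F * E * F) :=
    calc E = (E * F + F * E) * F - F * E * F := by
          rw [Matrix.add_mul, Matrix.mul_assoc, h.mul_self_right, Matrix.mul_one]; abel
      _ = -(F * E * F) := by rw [h.anticomm, Matrix.zero_mul, zero_sub]
  have hcycle : (F * E * F).trace = E.trace := by
    rw [Matrix.trace_mul_comm, ← Matrix.mul_assoc, h.mul_self_right, Matrix.one_mul]
  have hneg : E.trace = -E.trace := by
    conv_lhs => rw [hconj]
    rw [Matrix.trace_neg, hcycle]
  exact self_eq_neg.mp hneg

theorem trace_right [CharZero 𝕜] (h : IsCliffordPair E F) : F.trace = 0 :=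
  h.symm.trace_left

theorem trace_mul [CharZero 𝕜] (h : IsCliffordPair E F) : (E * F).trace = 0 := by
  have h' := congrArg Matrix.trace h.anticomm
  rw [Matrix.trace_add, Matrix.trace_mul_comm F, Matrix.trace_zero] at h'
  exact add_self_eq_zero.mp h'

variable (x y : 𝕜)

theorem linComb_mul_self (h : IsCliffordPair E F) :
    (x • E + y • F) * (x • E + y • F) = (x ^ 2 + y ^ 2) • 1 := by
  simp only [Matrix.add_mul, Matrix.mul_add, Matrix.smul_mul, Matrix.mul_smul,
    h.mul_self_left, h.mul_self_right]
  linear_combination (norm := module) (x * y) • h.anticomm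

theorem anticomm_linComb_left (h : IsCliffordPair E F) :
    E * (x • E + y • F) + (x • E + y • F) * E = (2 * x) • 1 := by
  simp only [Matrix.add_mul, Matrix.mul_add, Matrix.smul_mul, Matrix.mul_smul, h.mul_self_left]
  linear_combination (norm := module) y • h.anticomm

theorem anticomm_linComb_right (h : IsCliffordPair E F) :
    F * (x • E + y • F) + (x • E + y • F) * F = (2 * y) • 1 := by
  simp only [Matrix.add_mul, Matrix.mul_add, Matrix.smul_mul, Matrix.mul_smul, h.mul_self_right]
  linear_combination (norm := module) x • h.anticomm

end IsCliffordPair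

section OffDiagBlocks

/-- The Kronecker product `σₓ ⊗ A`. -/
def offDiagBlocks (A : Matrix ι ι 𝕜) : Matrix (ι ⊕ ι) (ι ⊕ ι) 𝕜 := fromBlocks 0 A A 0

omit [Fintype ι] in
theorem fromBlocks_one_one_eq (A : Matrix ι ι 𝕜) : fromBlocks 1 A A 1 = 1 + offDiagBlocks A := by
  rw [offDiagBlocks, ← fromBlocks_one, fromBlocks_add]
  simp

omit [Fintype ι] [DecidableEq ι] in
theorem offDiagBlocks_linComb (A B : Matrix ι ι 𝕜) (x y : 𝕜) :
    offDiagBlocks (x • A + y • B) = x • offDiagBlocks A + y • offDiagBlocks B := by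
  simp [offDiagBlocks, fromBlocks_smul, fromBlocks_add]

omit [DecidableEq ι] in
theorem offDiagBlocks_mul_offDiagBlocks (A B : Matrix ι ι 𝕜) :
    offDiagBlocks A * offDiagBlocks B = fromBlocks (A * B) 0 0 (A * B) := by
  simp [offDiagBlocks, fromBlocks_multiply]

theorem IsCliffordPair.offDiagBlocks {A B : Matrix ι ι 𝕜} (h : IsCliffordPair A B) :
    IsCliffordPair (offDiagBlocks A) (offDiagBlocks B) where
  mul_self_left := by rw [offDiagBlocks_mul_offDiagBlocks, h.mul_self_left, fromBlocks_one]
  mul_self_right := by rw [offDiagBlocks_mul_offDiagBlocks, h.mul_self_right, fromBlocks_one]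
  anticomm := by
    rw [offDiagBlocks_mul_offDiagBlocks, offDiagBlocks_mul_offDiagBlocks, fromBlocks_add,
      h.anticomm, add_zero, fromBlocks_zero]

theorem isCliffordPair_offDiagBlocks_fromBlocks {A : Matrix ι ι 𝕜} (hA : A * A = 1) :
    IsCliffordPair (offDiagBlocks A) (fromBlocks 1 0 0 (-1)) where
  mul_self_left := by rw [offDiagBlocks_mul_offDiagBlocks, hA, fromBlocks_one]
  mul_self_right := by simp [fromBlocks_multiply, fromBlocks_one]
  anticomm := by simp [offDiagBlocks, fromBlocks_multiply, fromBlocks_add]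

end OffDiagBlocks

omit [Fintype ι] [DecidableEq ι] in
theorem diagonal_one_neg_one_mul_self : diagonal ![(1 : 𝕜), -1] * diagonal ![1, -1] = 1 := by
  rw [diagonal_mul_diagonal, ← diagonal_one]
  congr 1
  ext i
  fin_cases i <;> simp

section ScalarSquare

variable {Γ X Y : Matrix ι ι 𝕜} {ρ s t c c' : 𝕜}

theorem one_sub_mul_one_add_of_mul_self (hΓ : Γ * Γ = ρ • 1) :
    (1 - Γ) * (1 + Γ) = (1 - ρ) • 1 := by
  rw [Matrix.sub_mul, Matrix.one_mul, Matrix.mul_add, Matrix.mul_one, hΓ, sub_smul, one_smul]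
  abel

theorem inv_smul_one_add_of_mul_self (hΓ : Γ * Γ = ρ • 1) (hc : c ≠ 0) (hρ : ρ ≠ 1) :
    (c • (1 + Γ))⁻¹ = (c * (1 - ρ))⁻¹ • (1 - Γ) := by
  have hρ' : 1 - ρ ≠ 0 := sub_ne_zero.mpr hρ.symm
  refine Matrix.inv_eq_left_inv ?_
  rw [Matrix.smul_mul, Matrix.mul_smul, one_sub_mul_one_add_of_mul_self hΓ, smul_smul, smul_smul,
    mul_assoc, inv_mul_cancel₀ (mul_ne_zero hc hρ'), one_smul]

theorem inv_mul_smul_one_add_add_smul (hΓ : Γ * Γ = ρ • 1) (hc : c ≠ 0) (hρ : ρ ≠ 1) :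
    (c • (1 + Γ))⁻¹ * (c' • (1 + Γ) + c • X) = (c' / c) • 1 + (1 - ρ)⁻¹ • ((1 - Γ) * X) := by
  have hρ' : 1 - ρ ≠ 0 := sub_ne_zero.mpr hρ.symm
  rw [inv_smul_one_add_of_mul_self hΓ hc hρ, Matrix.mul_add, Matrix.smul_mul, Matrix.mul_smul,
    one_sub_mul_one_add_of_mul_self hΓ, Matrix.smul_mul, Matrix.mul_smul, smul_smul, smul_smul,
    smul_smul]
  congr 2 <;> field_simp

theorem trace_one_sub_mul_of_anticomm [CharZero 𝕜] (hX : X * Γ + Γ * X = (2 * s) • 1)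
    (hXt : X.trace = 0) : ((1 - Γ) * X).trace = -(Fintype.card ι * s) := by
  have h := congrArg Matrix.trace hX
  rw [Matrix.trace_add, Matrix.trace_mul_comm X, Matrix.trace_smul, Matrix.trace_one,
    smul_eq_mul, ← two_mul, mul_assoc, mul_comm s] at h
  rw [Matrix.sub_mul, Matrix.one_mul, Matrix.trace_sub, hXt, mul_left_cancel₀ two_ne_zero h,
    zero_sub]

theorem one_sub_mul_mul_one_sub_mul (hΓ : Γ * Γ = ρ • 1) (hX : X * Γ + Γ * X = (2 * s) • 1) :
    (1 - Γ) * X * ((1 - Γ) * Y) = (1 - ρ) • (X * Y) - (2 * s) • ((1 - Γ) * Y) := by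
  have hswap : X * (1 - Γ) = (1 + Γ) * X - (2 * s) • 1 := by
    rw [Matrix.mul_sub, Matrix.mul_one, Matrix.add_mul, Matrix.one_mul, ← hX]; abel
  calc (1 - Γ) * X * ((1 - Γ) * Y) = (1 - Γ) * (X * (1 - Γ)) * Y := by
        simp only [Matrix.mul_assoc]
    _ = _ := by
      rw [hswap, Matrix.mul_sub, ← Matrix.mul_assoc, one_sub_mul_one_add_of_mul_self hΓ,
        Matrix.sub_mul, Matrix.mul_smul, Matrix.mul_one, Matrix.smul_mul, Matrix.smul_mul,
        Matrix.one_mul, Matrix.smul_mul]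

theorem trace_mul_of_anticomm [CharZero 𝕜] (a β : 𝕜) (hΓ : Γ * Γ = ρ • 1)
    (hX : X * Γ + Γ * X = (2 * s) • 1) (hY : Y * Γ + Γ * Y = (2 * t) • 1)
    (hXt : X.trace = 0) (hYt : Y.trace = 0) :
    (((a * s) • 1 + β • ((1 - Γ) * X)) * ((a * t) • 1 + β • ((1 - Γ) * Y))).trace =
      Fintype.card ι * ((a ^ 2 - 2 * a * β + 2 * β ^ 2) * s * t) +
        β ^ 2 * (1 - ρ) * (X * Y).trace := by
  simp only [Matrix.add_mul, Matrix.mul_add, Matrix.smul_mul, Matrix.mul_smul, Matrix.one_mul,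
    Matrix.mul_one, one_sub_mul_mul_one_sub_mul hΓ hX, Matrix.trace_add, Matrix.trace_sub,
    Matrix.trace_smul, Matrix.trace_one, trace_one_sub_mul_of_anticomm hX hXt,
    trace_one_sub_mul_of_anticomm hY hYt, smul_eq_mul]
  ring

end ScalarSquare

end Matrix

noncomputable def covScale (r : ℝ) : ℝ := (1 + r) / (1 - r) / 2

theorem hasDerivAt_covScale {r : ℝ} (hr : r ≠ 1) : HasDerivAt covScale ((1 - r) ^ 2)⁻¹ r := by
  have hr' : 1 - r ≠ 0 := sub_ne_zero.mpr hr.symm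
  have h : HasDerivAt covScale _ r :=
    (((hasDerivAt_id r).const_add 1).div ((hasDerivAt_id r).const_sub 1) hr').div_const 2
  refine h.congr_deriv ?_
  simp only [id]
  field_simp
  ring

theorem hasDerivAt_covScale_sqrt {x y : ℝ} (h0 : 0 < x ^ 2 + y ^ 2) (h1 : x ^ 2 + y ^ 2 < 1) :
    HasDerivAt (fun t => covScale √(x ^ 2 + t ^ 2))
      (y / (√(x ^ 2 + y ^ 2) * (1 - √(x ^ 2 + y ^ 2)) ^ 2)) y := by
  have hr0 := Real.sqrt_pos.mpr h0
  have hr1 : √(x ^ 2 + y ^ 2) < 1 := (Real.sqrt_lt' one_pos).mpr (by rwa [one_pow])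
  have hsqrt : HasDerivAt (fun t => √(x ^ 2 + t ^ 2)) (2 * y / (2 * √(x ^ 2 + y ^ 2))) y :=
    ((hasDerivAt_pow 2 y).const_add _).sqrt h0.ne' |>.congr_deriv (by ring)
  refine ((hasDerivAt_covScale hr1.ne).comp y hsqrt).congr_deriv ?_
  field_simp

section GaussianCov

variable {ι : Type*} [DecidableEq ι]

noncomputable def gaussianCov (E F : Matrix ι ι ℝ) (x y : ℝ) : Matrix ι ι ℝ :=
  covScale √(x ^ 2 + y ^ 2) • (1 + (x • E + y • F))

theorem gaussianCov_comm (E F : Matrix ι ι ℝ) (x y : ℝ) :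
    gaussianCov E F x y = gaussianCov F E y x := by
  rw [gaussianCov, gaussianCov, add_comm (x ^ 2), add_comm (x • E)]

noncomputable def partialFst (S : ℝ → ℝ → Matrix ι ι ℝ) (x y : ℝ) : Matrix ι ι ℝ :=
  of fun i j => deriv (fun t => S t y i j) x

noncomputable def partialSnd (S : ℝ → ℝ → Matrix ι ι ℝ) (x y : ℝ) : Matrix ι ι ℝ :=
  of fun i j => deriv (fun t => S x t i j) y

theorem partialSnd_gaussianCov (E F : Matrix ι ι ℝ) {x y : ℝ} (h0 : 0 < x ^ 2 + y ^ 2)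
    (h1 : x ^ 2 + y ^ 2 < 1) :
    partialSnd (gaussianCov E F) x y =
      (y / (√(x ^ 2 + y ^ 2) * (1 - √(x ^ 2 + y ^ 2)) ^ 2)) • (1 + (x • E + y • F)) +
        covScale √(x ^ 2 + y ^ 2) • F := by
  ext i j
  simp only [partialSnd, gaussianCov, of_apply, ← add_assoc, Matrix.smul_apply, Matrix.add_apply,
    smul_eq_mul]
  refine ((hasDerivAt_covScale_sqrt h0 h1).mul (((hasDerivAt_id y).mul_const (F i j)).const_add
    ((1 : Matrix ι ι ℝ) i j + x * E i j))).deriv.trans ?_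
  simp

theorem partialFst_gaussianCov (E F : Matrix ι ι ℝ) (x y : ℝ) :
    partialFst (gaussianCov E F) x y = partialSnd (gaussianCov F E) y x := by
  ext i j
  simp only [partialFst, partialSnd, of_apply, gaussianCov_comm E F]

variable [Fintype ι] {E F : Matrix ι ι ℝ} {x y : ℝ}

theorem gaussianCov_inv_mul_partialSnd (hEF : IsCliffordPair E F) (h0 : 0 < x ^ 2 + y ^ 2)
    (h1 : x ^ 2 + y ^ 2 < 1) :
    (gaussianCov E F x y)⁻¹ * partialSnd (gaussianCov E F) x y =
      (2 / (√(x ^ 2 + y ^ 2) * (1 - (x ^ 2 + y ^ 2))) * y) • 1 +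
        (1 - (x ^ 2 + y ^ 2))⁻¹ • ((1 - (x • E + y • F)) * F) := by
  have hr0 := Real.sqrt_pos.mpr h0
  have hr1 : √(x ^ 2 + y ^ 2) < 1 := (Real.sqrt_lt' one_pos).mpr (by rwa [one_pow])
  have hc : covScale √(x ^ 2 + y ^ 2) ≠ 0 := by
    have : 0 < 1 - √(x ^ 2 + y ^ 2) := by linarith
    unfold covScale
    positivity
  rw [gaussianCov, partialSnd_gaussianCov E F h0 h1,
    inv_mul_smul_one_add_add_smul (hEF.linComb_mul_self x y) hc h1.ne]
  congr 2
  set r := √(x ^ 2 + y ^ 2)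
  have hr2 : r ^ 2 = x ^ 2 + y ^ 2 := Real.sq_sqrt h0.le
  rw [← hr2, covScale]
  have : 1 - r ≠ 0 := by linarith
  have : 1 - r ^ 2 ≠ 0 := by nlinarith
  field_simp
  ring

theorem gaussianCov_inv_mul_partialFst (hEF : IsCliffordPair E F) (h0 : 0 < x ^ 2 + y ^ 2)
    (h1 : x ^ 2 + y ^ 2 < 1) :
    (gaussianCov E F x y)⁻¹ * partialFst (gaussianCov E F) x y =
      (2 / (√(x ^ 2 + y ^ 2) * (1 - (x ^ 2 + y ^ 2))) * x) • 1 +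
        (1 - (x ^ 2 + y ^ 2))⁻¹ • ((1 - (x • E + y • F)) * E) := by
  rw [add_comm (x ^ 2)] at h0 h1 ⊢
  rw [partialFst_gaussianCov, gaussianCov_comm, gaussianCov_inv_mul_partialSnd hEF.symm h0 h1,
    add_comm (x • E)]

noncomputable def fisherRao (S A B : Matrix ι ι ℝ) : ℝ := 1 / 2 * (S⁻¹ * A * S⁻¹ * B).trace

noncomputable def fisherMetric (S : ℝ → ℝ → Matrix ι ι ℝ) (x y : ℝ) : Matrix (Fin 2) (Fin 2) ℝ :=
  of fun μ ν => fisherRao (S x y) (![partialFst S x y, partialSnd S x y] μ)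
    (![partialFst S x y, partialSnd S x y] ν)

theorem fisherRao_eq_half_trace_mul (S A B : Matrix ι ι ℝ) :
    fisherRao S A B = 1 / 2 * ((S⁻¹ * A) * (S⁻¹ * B)).trace := by
  simp only [fisherRao, Matrix.mul_assoc]

theorem det_fisherMetric_gaussianCov (hEF : IsCliffordPair E F) (h0 : 0 < x ^ 2 + y ^ 2)
    (h1 : x ^ 2 + y ^ 2 < 1) :
    (fisherMetric (gaussianCov E F) x y).det = (Fintype.card ι / 2) ^ 2 *
      (1 + (2 - √(x ^ 2 + y ^ 2)) ^ 2) / (1 - √(x ^ 2 + y ^ 2) ^ 2) ^ 3 := by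
  have hΓ := hEF.linComb_mul_self x y
  have hE := hEF.anticomm_linComb_left x y
  have hF := hEF.anticomm_linComb_right x y
  simp only [det_fin_two, fisherMetric, of_apply, cons_val_zero, cons_val_one,
    fisherRao_eq_half_trace_mul, gaussianCov_inv_mul_partialFst hEF h0 h1,
    gaussianCov_inv_mul_partialSnd hEF h0 h1]
  simp only [trace_mul_of_anticomm _ _ hΓ hE hE hEF.trace_left hEF.trace_left,
    trace_mul_of_anticomm _ _ hΓ hE hF hEF.trace_left hEF.trace_right,
    trace_mul_of_anticomm _ _ hΓ hF hE hEF.trace_right hEF.trace_left,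
    trace_mul_of_anticomm _ _ hΓ hF hF hEF.trace_right hEF.trace_right,
    hEF.mul_self_left, hEF.mul_self_right, hEF.trace_mul, hEF.symm.trace_mul, trace_one]
  set a := 2 / (√(x ^ 2 + y ^ 2) * (1 - (x ^ 2 + y ^ 2)))
  set β := (1 - (x ^ 2 + y ^ 2))⁻¹
  set d : ℝ := (Fintype.card ι : ℝ)
  -- `g` is `d/2` times a scalar matrix plus a rank-one matrix in `(x, y)`.
  calc _ = (d / 2) ^ 2 * (β ^ 2 * (1 - (x ^ 2 + y ^ 2))) *
        (β ^ 2 * (1 - (x ^ 2 + y ^ 2)) + (a ^ 2 - 2 * a * β + 2 * β ^ 2) * (x ^ 2 + y ^ 2)) := by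
        ring
    _ = _ := by
      have hr0 := Real.sqrt_pos.mpr h0
      have hr1 : √(x ^ 2 + y ^ 2) < 1 := (Real.sqrt_lt' one_pos).mpr (by rwa [one_pow])
      have hr2 : √(x ^ 2 + y ^ 2) ^ 2 = x ^ 2 + y ^ 2 := Real.sq_sqrt h0.le
      simp only [a, β]
      generalize √(x ^ 2 + y ^ 2) = r at *
      rw [← hr2]
      have : 1 - r ^ 2 ≠ 0 := by nlinarith
      field_simp
      ring

end GaussianCov

/-- Determinant of the Fisher–Rao metric of the paper's pure two-mode symmetric
bipartite Gaussian state with covariance `Sig(m,n) = (b/2)·[[I₄, γ],[γ, I₄]]`,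
`b = (1+R)/(1−R)`: `det g = 16(1 + (2 − R)²)/(1 − R²)³`. -/
theorem fisher_rao_det (m n : ℝ) (h0 : 0 < m ^ 2 + n ^ 2) (h1 : m ^ 2 + n ^ 2 < 1)
    (R : ℝ) (hR : R = Real.sqrt (m ^ 2 + n ^ 2))
    (σz : Matrix (Fin 2) (Fin 2) ℝ) (hσz : σz = Matrix.diagonal ![1, -1])
    (γ : ℝ → ℝ → Matrix (Fin 2 ⊕ Fin 2) (Fin 2 ⊕ Fin 2) ℝ)
    (hγ : ∀ x y : ℝ, γ x y = Matrix.fromBlocks (y • (1 : Matrix (Fin 2) (Fin 2) ℝ))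
        (x • σz) (x • σz) (-(y • (1 : Matrix (Fin 2) (Fin 2) ℝ))))
    (Sig : ℝ → ℝ →
      Matrix ((Fin 2 ⊕ Fin 2) ⊕ (Fin 2 ⊕ Fin 2)) ((Fin 2 ⊕ Fin 2) ⊕ (Fin 2 ⊕ Fin 2)) ℝ)
    (hSig : ∀ x y : ℝ, Sig x y =
      (((1 + Real.sqrt (x ^ 2 + y ^ 2)) / (1 - Real.sqrt (x ^ 2 + y ^ 2))) / 2) •
        Matrix.fromBlocks 1 (γ x y) (γ x y) 1)
    -- entrywise partial derivatives of `Sig` at `(m, n)`: `D1 = ∂Sig/∂n`, `D2 = ∂Sig/∂m`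
    (D1 D2 : Matrix ((Fin 2 ⊕ Fin 2) ⊕ (Fin 2 ⊕ Fin 2)) ((Fin 2 ⊕ Fin 2) ⊕ (Fin 2 ⊕ Fin 2)) ℝ)
    (hD1 : ∀ i j, D1 i j = deriv (fun t => Sig m t i j) n)
    (hD2 : ∀ i j, D2 i j = deriv (fun t => Sig t n i j) m)
    -- the Fisher–Rao metric `g_{μν} = (1/2)·Tr[Sig⁻¹(∂_μ Sig)Sig⁻¹(∂_ν Sig)]`
    (g : Matrix (Fin 2) (Fin 2) ℝ)
    (hg : g = !![(1 / 2 : ℝ) * ((Sig m n)⁻¹ * D1 * (Sig m n)⁻¹ * D1).trace,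
                 (1 / 2 : ℝ) * ((Sig m n)⁻¹ * D1 * (Sig m n)⁻¹ * D2).trace;
                 (1 / 2 : ℝ) * ((Sig m n)⁻¹ * D2 * (Sig m n)⁻¹ * D1).trace,
                 (1 / 2 : ℝ) * ((Sig m n)⁻¹ * D2 * (Sig m n)⁻¹ * D2).trace]) :
    g.det = 16 * (1 + (2 - R) ^ 2) / (1 - R ^ 2) ^ 3 := by
  set Γn := offDiagBlocks (fromBlocks 1 0 0 (-1) : Matrix (Fin 2 ⊕ Fin 2) (Fin 2 ⊕ Fin 2) ℝ)
  set Γm := offDiagBlocks (offDiagBlocks σz)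
  have hClifford : IsCliffordPair Γn Γm :=
    (isCliffordPair_offDiagBlocks_fromBlocks
      (hσz ▸ diagonal_one_neg_one_mul_self)).symm.offDiagBlocks
  have hSig' : ∀ x y, Sig x y = gaussianCov Γn Γm y x := by
    intro x y
    have hγ' : γ x y = y • fromBlocks 1 0 0 (-1) + x • offDiagBlocks σz := by
      simp [hγ, offDiagBlocks, fromBlocks_smul, fromBlocks_add]
    rw [hSig, hγ', fromBlocks_one_one_eq, offDiagBlocks_linComb, gaussianCov, covScale,
      add_comm (x ^ 2)]
  have hg' : g = fisherMetric (gaussianCov Γn Γm) n m := by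
    have hD1' : D1 = partialFst (gaussianCov Γn Γm) n m := by
      ext i j; simp only [hD1, partialFst, of_apply, hSig']
    have hD2' : D2 = partialSnd (gaussianCov Γn Γm) n m := by
      ext i j; simp only [hD2, partialSnd, of_apply, hSig']
    rw [hg, hD1', hD2', hSig']
    ext μ ν
    fin_cases μ <;> fin_cases ν <;> rfl
  rw [hg', det_fisherMetric_gaussianCov hClifford (by linarith) (by linarith), hR,
    add_comm (n ^ 2)]
  norm_num
end
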